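/- Fix integers n ≥ 1 and p ≥ 1, and let ω ∈ ℂ be a primitive p-th root of unity. Let F = Σ_{k≥0} (binom(nk, k)/((n−1)k+1)) X^k ∈ ℂ[[X]] be the Fuss–Catalan power series, and let H ∈ ℂ[[X]] be the (unique) formal power series with constant term 1 satisfying X·H′ = H · Σ_{m≥1} binom(nmp, mp) X^m. Then ∏_{k=0}^{p−1} (1 − F(ω^k X)) = −X^p · H(X^p) in ℂ[[X]], where F(ω^k X) denotes the rescaling of F by ω^k and H(X^p) the substitution of X^p into H. (This is the identity e(*binom(np, p)) = (−1/z) ∏_{k=0}^{p−1} (1 − e((1/n)*binom(n,1))(ω^k z^{1/p})).) -/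

import Mathlib

/-!
Write `n = m + 1` and `F = 1 + X * U` for the Fuss–Catalan series `F`. The Raney numbers
`R(r, i) = r / (r + n i) * binom(r + n i, i)` satisfy a Pascal-type recurrence in `r` and `i`,
which yields the convolution `∑_{k + l = j} binom(n k, k) R(r, l) = binom(r + n j, j)`.
For `r = 1` it reads `F' = U * B` with `B = ∑ binom(n j, j) X ^ j`, i.e. `X U' / U = B - 1`.
Hence `Q = ∏_k U(ω^k X)` has `X Q' / Q = ∑_k (B - 1)(ω^k X)`, which the filter
`∑_k ω^(k j) = p [p ∣ j]` turns into `p T(X^p)` with `T = ∑_{j ≥ 1} binom(n j p, j p) X ^ j`;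
so does `H(X^p)`. Both series have constant term `1`, so `Q = H(X^p)`, and
`∏_k (1 - F(ω^k X)) = ∏_k (-ω^k X) * Q = -X^p H(X^p)`.
-/

open PowerSeries Finset

/-- With `n = m + 1`, `raney m r i = r / (r + n i) * binom(r + n i, i)`, written without division;
it is the coefficient of `X ^ i` in `F ^ r`. -/
def raney (m r : ℕ) : ℕ → ℤ
  | 0 => 1
  | i + 1 => ((r + (m + 1) * (i + 1)).choose (i + 1) : ℤ) -
      (m + 1) * (r + (m + 1) * i + m).choose i

section Raney

variable (m : ℕ)

@[simp] lemma raney_zero (r : ℕ) : raney m r 0 = 1 := rfl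

lemma raney_zero_succ (i : ℕ) : raney m 0 (i + 1) = 0 := by
  have h := Nat.add_one_mul_choose_eq ((m + 1) * i + m) i
  rw [show (m + 1) * i + m + 1 = (m + 1) * (i + 1) by ring] at h
  zify at h
  refine (mul_eq_zero.mp ?_).resolve_left (by positivity : ((i : ℤ) + 1) ≠ 0)
  simp only [raney, zero_add]
  linear_combination -h

lemma raney_succ_succ (r i : ℕ) :
    raney m (r + 1) (i + 1) = raney m r (i + 1) + raney m (r + (m + 1)) i := by
  cases i with
  | zero => simp [raney]
  | succ i =>
    simp only [raney]
    set v := r + (m + 1) * (i + 1) + m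
    rw [show r + 1 + (m + 1) * (i + 1 + 1) = v + 1 + 1 by ring,
      show r + 1 + (m + 1) * (i + 1) + m = v + 1 by ring,
      show r + (m + 1) * (i + 1 + 1) = v + 1 by ring,
      show r + (m + 1) + (m + 1) * (i + 1) = v + 1 by ring,
      show r + (m + 1) + (m + 1) * i + m = v by ring,
      Nat.choose_succ_succ' (v + 1), Nat.choose_succ_succ' v]
    push_cast
    ring

lemma sum_antidiagonal_choose_mul_raney (j r : ℕ) :
    ∑ x ∈ antidiagonal j, (((m + 1) * x.1).choose x.1 : ℤ) * raney m r x.2 =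
      (r + (m + 1) * j).choose j := by
  induction j generalizing r with
  | zero => simp
  | succ j ihj =>
    induction r with
    | zero => simp [Nat.sum_antidiagonal_succ', raney_zero_succ]
    | succ r ihr =>
      rw [Nat.sum_antidiagonal_succ'] at ihr ⊢
      simp only [raney_succ_succ, raney_zero, Int.mul_add, sum_add_distrib, ihj] at ihr ⊢
      rw [show r + 1 + (m + 1) * (j + 1) = r + (m + 1) * (j + 1) + 1 by ring,
        Nat.choose_succ_succ', show r + (m + 1) + (m + 1) * j = r + (m + 1) * (j + 1) by ring]
      push_cast
      linear_combination ihr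

lemma choose_mul_succ_succ_mul (N : ℕ) :
    (((m + 1) * (N + 1)).choose (N + 1) : ℤ) * (N + 1) =
      ((m + 1) * (N + 1)).choose N * (m * (N + 1) + 1) := by
  have h := Nat.choose_succ_right_eq ((m + 1) * (N + 1)) N
  rw [Nat.sub_eq_of_eq_add (show (m + 1) * (N + 1) = m * (N + 1) + 1 + N by ring)] at h
  exact_mod_cast h

lemma succ_mul_raney_one_succ (N : ℕ) :
    (N + 1) * raney m 1 (N + 1) = ((m + 1) * (N + 1)).choose N := by
  simp only [raney]
  rw [show 1 + (m + 1) * (N + 1) = (m + 1) * (N + 1) + 1 by ring,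
    show 1 + (m + 1) * N + m = (m + 1) * (N + 1) by ring, Nat.choose_succ_succ']
  push_cast
  linear_combination choose_mul_succ_succ_mul m N

lemma raney_one_mul (j : ℕ) : raney m 1 j * (m * j + 1) = ((m + 1) * j).choose j := by
  cases j with
  | zero => simp
  | succ N =>
    refine mul_left_cancel₀ (by positivity : ((N : ℤ) + 1) ≠ 0) ?_
    rw [← mul_assoc, succ_mul_raney_one_succ]
    push_cast
    linear_combination -choose_mul_succ_succ_mul m N

lemma sum_antidiagonal_choose_mul_raney_one_succ (N : ℕ) :
    ∑ x ∈ antidiagonal N, (((m + 1) * x.1).choose x.1 : ℤ) * raney m 1 (x.2 + 1) =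
      (N + 1) * raney m 1 (N + 1) := by
  have h := sum_antidiagonal_choose_mul_raney m (N + 1) 1
  rw [Nat.sum_antidiagonal_succ', raney_zero, mul_one,
    show 1 + (m + 1) * (N + 1) = (m + 1) * (N + 1) + 1 by ring, Nat.choose_succ_succ'] at h
  rw [succ_mul_raney_one_succ]
  push_cast at h
  linear_combination h

end Raney

namespace PowerSeries

variable {R : Type*} [CommRing R]

lemma coeff_X_mul_derivative (f : R⟦X⟧) (n : ℕ) :
    coeff n (X * d⁄dX R f) = n * coeff n f := by
  cases n with
  | zero => simp
  | succ n => rw [coeff_succ_X_mul, coeff_derivative]; push_cast; ring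

@[simp] lemma constantCoeff_rescale (a : R) (f : R⟦X⟧) :
    constantCoeff (rescale a f) = constantCoeff f := by
  rw [← coeff_zero_eq_constantCoeff_apply, coeff_rescale, pow_zero, one_mul,
    coeff_zero_eq_constantCoeff_apply]

lemma X_mul_derivative_rescale (a : R) (f : R⟦X⟧) :
    X * d⁄dX R (rescale a f) = rescale a (X * d⁄dX R f) := by
  ext n
  simp only [coeff_X_mul_derivative, coeff_rescale]
  ring

lemma X_mul_derivative_expand (p : ℕ) (hp : p ≠ 0) (f : R⟦X⟧) :
    X * d⁄dX R (expand p hp f) = (p : R⟦X⟧) * expand p hp (X * d⁄dX R f) := by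
  ext n
  rw [← map_natCast (C (R := R)), coeff_C_mul, coeff_X_mul_derivative, coeff_expand, coeff_expand]
  split_ifs with h
  · obtain ⟨k, rfl⟩ := h
    rw [Nat.mul_div_cancel_left k (Nat.pos_of_ne_zero hp), coeff_X_mul_derivative]
    push_cast
    ring
  · simp

lemma X_mul_derivative_prod {ι : Type*} (s : Finset ι) (f g : ι → R⟦X⟧)
    (h : ∀ i ∈ s, X * d⁄dX R (f i) = f i * g i) :
    X * d⁄dX R (∏ i ∈ s, f i) = (∏ i ∈ s, f i) * ∑ i ∈ s, g i := by
  induction s using Finset.cons_induction with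
  | empty => simp
  | cons a s ha ih =>
    rw [prod_cons, sum_cons, Derivation.leibniz, smul_eq_mul, smul_eq_mul]
    linear_combination (∏ i ∈ s, f i) * h a (mem_cons_self a s) +
      f a * ih fun i hi => h i (mem_cons_of_mem hi)

lemma eq_of_X_mul_derivative_eq_mul [IsAddTorsionFree R] {f g T : R⟦X⟧}
    (hT : constantCoeff T = 0) (hf : X * d⁄dX R f = f * T) (hg : X * d⁄dX R g = g * T)
    (h0 : constantCoeff f = constantCoeff g) : f = g := by
  rw [← sub_eq_zero]
  have hD : X * d⁄dX R (f - g) = (f - g) * T := by rw [map_sub, mul_sub, hf, hg, sub_mul]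
  ext N
  induction N using Nat.strong_induction_on with
  | _ N ih =>
    rcases N.eq_zero_or_pos with rfl | hN
    · simp [h0]
    · have hcoeff := congrArg (coeff N) hD
      rw [coeff_X_mul_derivative, coeff_mul, Nat.sum_antidiagonal_eq_sum_range_succ_mk,
        sum_range_succ, Nat.sub_self, coeff_zero_eq_constantCoeff_apply T, hT, mul_zero, add_zero,
        sum_eq_zero fun k hk => by rw [ih k (mem_range.mp hk), map_zero, zero_mul]] at hcoeff
      rw [map_zero]
      apply nsmul_right_injective hN.ne'
      simpa [nsmul_eq_mul] using hcoeff

end PowerSeries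

namespace IsPrimitiveRoot

variable {R : Type*} [CommRing R] [IsDomain R] {ω : R} {p : ℕ}

lemma sum_range_pow_pow (hω : IsPrimitiveRoot ω p) (j : ℕ) :
    ∑ k ∈ range p, (ω ^ k) ^ j = if p ∣ j then (p : R) else 0 := by
  simp_rw [← pow_mul, mul_comm _ j, pow_mul]
  split_ifs with h
  · simp [(hω.pow_eq_one_iff_dvd j).mpr h]
  · have hne : ω ^ j - 1 ≠ 0 := sub_ne_zero.mpr fun h1 => h ((hω.pow_eq_one_iff_dvd j).mp h1)
    refine (mul_eq_zero.mp ?_).resolve_right hne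
    rw [geom_sum_mul, ← pow_mul, mul_comm, pow_mul, hω.pow_eq_one, one_pow, sub_self]

lemma prod_range_neg_pow [NeZero p] (hω : IsPrimitiveRoot ω p) :
    ∏ k ∈ range p, -ω ^ k = -1 := by
  have hp := NeZero.pos p
  have h := hω.pow_sub_pow_eq_prod_sub_mul 0 1 hp
  rw [zero_pow hp.ne', one_pow, zero_sub] at h
  rw [h]
  refine prod_nbij (ω ^ ·) (fun k _ => ?_) (hω.injOn_pow.mono fun k hk => by simpa using hk)
    (fun ζ hζ => ?_) (fun k _ => by simp)
  · exact (Polynomial.mem_nthRootsFinset hp (1 : R)).mpr (by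
      rw [← pow_mul, mul_comm, pow_mul, hω.pow_eq_one, one_pow])
  · obtain ⟨k, hk, rfl⟩ :=
      hω.eq_pow_of_pow_eq_one ((Polynomial.mem_nthRootsFinset hp (1 : R)).mp hζ)
    exact ⟨k, by simpa using hk, rfl⟩

lemma coeff_sum_rescale_pow (hω : IsPrimitiveRoot ω p) (f : R⟦X⟧) (j : ℕ) :
    coeff j (∑ k ∈ range p, rescale (ω ^ k) f) = if p ∣ j then p * coeff j f else 0 := by
  simp only [map_sum, coeff_rescale, ← sum_mul, hω.sum_range_pow_pow, ite_mul, zero_mul]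

end IsPrimitiveRoot

namespace PowerSeries

section FussCatalan

variable (R : Type*) [CommRing R] (m : ℕ)

def fussCatalanSeries (K : Type*) [Field K] (n : ℕ) : K⟦X⟧ :=
  mk fun j => ((n * j).choose j : K) / (((n : K) - 1) * j + 1)

def fussTail : R⟦X⟧ := mk fun j => (raney m 1 (j + 1) : R)

def fussBinomialSeries : R⟦X⟧ := mk fun j => (((m + 1) * j).choose j : R)

@[simp] lemma constantCoeff_fussTail : constantCoeff (fussTail R m) = 1 := by
  simp [fussTail, ← coeff_zero_eq_constantCoeff_apply, raney]

lemma derivative_X_mul_fussTail :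
    d⁄dX R (X * fussTail R m) = fussBinomialSeries R m * fussTail R m := by
  ext N
  rw [coeff_derivative, coeff_succ_X_mul, coeff_mul]
  have h := congrArg (Int.cast : ℤ → R) (sum_antidiagonal_choose_mul_raney_one_succ m N)
  push_cast at h
  simp only [fussTail, fussBinomialSeries, coeff_mk, h]
  ring

lemma X_mul_derivative_fussTail :
    X * d⁄dX R (fussTail R m) = fussTail R m * (fussBinomialSeries R m - 1) := by
  have h := derivative_X_mul_fussTail R m
  rw [Derivation.leibniz, derivative_X, smul_eq_mul, smul_eq_mul] at h
  linear_combination h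

lemma coeff_fussCatalanSeries_succ (K : Type*) [Field K] [CharZero K] (j : ℕ) :
    coeff j (fussCatalanSeries K (m + 1)) = raney m 1 j := by
  have h := congrArg (Int.cast : ℤ → K) (raney_one_mul m j)
  push_cast at h
  have hden : (((m + 1 : ℕ) : K) - 1) * j + 1 = ((m * j : ℕ) : K) + 1 := by push_cast; ring
  rw [fussCatalanSeries, coeff_mk, hden, div_eq_iff (Nat.cast_add_one_ne_zero _), ← h]
  push_cast
  ring

lemma fussCatalanSeries_succ_eq (K : Type*) [Field K] [CharZero K] :
    fussCatalanSeries K (m + 1) = 1 + X * fussTail K m := by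
  ext (_ | j) <;> simp [coeff_fussCatalanSeries_succ, fussTail]

lemma one_sub_rescale_fussCatalanSeries_succ (K : Type*) [Field K] [CharZero K] (a : K) :
    1 - rescale a (fussCatalanSeries K (m + 1)) = C (-a) * X * rescale a (fussTail K m) := by
  rw [fussCatalanSeries_succ_eq, map_add, map_one, map_mul, rescale_X, map_neg]
  ring

lemma sum_rescale_fussBinomialSeries_sub_one [IsDomain R] {ω : R} {p : ℕ} [NeZero p]
    (hω : IsPrimitiveRoot ω p) :
    ∑ k ∈ range p, rescale (ω ^ k) (fussBinomialSeries R m - 1) =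
      (p : R⟦X⟧) * expand p (NeZero.ne p)
        (mk fun j => if j = 0 then 0 else (((m + 1) * j * p).choose (j * p) : R)) := by
  ext j
  rw [hω.coeff_sum_rescale_pow, ← map_natCast (C (R := R)), coeff_C_mul, coeff_expand]
  split_ifs with h
  · obtain ⟨t, rfl⟩ := h
    rw [Nat.mul_div_cancel_left t (NeZero.pos p)]
    rcases t.eq_zero_or_pos with rfl | ht
    · simp [fussBinomialSeries]
    · simp [fussBinomialSeries, ht.ne', NeZero.ne p, mul_comm p t, mul_assoc]
  · simp

end FussCatalan

end PowerSeries

/-- The identity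
`e(*binom(np,p)) = (−1/z) ∏_{k=0}^{p−1} (1 − e((1/n)*binom(n,1))(ω^k z^{1/p}))`:
if `F` is the Fuss–Catalan series, `H` is the power series with constant term 1
whose logarithmic derivative has coefficients `binom(nmp,mp)`, and `ω` is a
primitive `p`-th root of unity, then
`∏_{k=0}^{p−1} (1 − F(ω^k X)) = −X^p · H(X^p)`. -/
theorem prod_one_sub_rescale_fussCatalan (n p : ℕ) (hn : 1 ≤ n) (hp : 1 ≤ p)
    (ω : ℂ) (hω : IsPrimitiveRoot ω p) (H : ℂ⟦X⟧)
    (hH0 : constantCoeff H = 1)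
    (hH : X * (d⁄dX ℂ H) =
      H * (PowerSeries.mk fun m =>
        if m = 0 then 0 else (Nat.choose (n * m * p) (m * p) : ℂ))) :
    ∏ k ∈ Finset.range p,
        (1 - PowerSeries.rescale (ω ^ k)
          (PowerSeries.mk fun j => (Nat.choose (n * j) j : ℂ) / (((n : ℂ) - 1) * j + 1))) =
      -(X ^ p) *
        PowerSeries.mk (fun k => if p ∣ k then PowerSeries.coeff (k / p) H else 0) := by
  obtain ⟨m, rfl⟩ : ∃ m, n = m + 1 := ⟨n - 1, by omega⟩
  have : NeZero p := ⟨by omega⟩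
  set T : ℂ⟦X⟧ := mk fun j => if j = 0 then 0 else (((m + 1) * j * p).choose (j * p) : ℂ)
  set Q := ∏ k ∈ range p, rescale (ω ^ k) (fussTail ℂ m)
  have hQ : X * d⁄dX ℂ Q = Q * ((p : ℂ⟦X⟧) * expand p (NeZero.ne p) T) := by
    rw [← sum_rescale_fussBinomialSeries_sub_one ℂ m hω]
    exact X_mul_derivative_prod _ _ _ fun k _ => by
      rw [X_mul_derivative_rescale, X_mul_derivative_fussTail, map_mul]
  have hHp : X * d⁄dX ℂ (expand p (NeZero.ne p) H) =
      expand p (NeZero.ne p) H * ((p : ℂ⟦X⟧) * expand p (NeZero.ne p) T) := by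
    rw [X_mul_derivative_expand, hH, map_mul]
    ring
  have hQH : Q = expand p (NeZero.ne p) H :=
    eq_of_X_mul_derivative_eq_mul (by simp [T]) hQ hHp (by simp [Q, hH0])
  calc ∏ k ∈ range p, (1 - rescale (ω ^ k) (fussCatalanSeries ℂ (m + 1)))
      = C (∏ k ∈ range p, -ω ^ k) * X ^ p * Q := by
        simp_rw [one_sub_rescale_fussCatalanSeries_succ]
        rw [prod_mul_distrib, prod_mul_distrib, prod_const, card_range,
          map_prod]
    _ = -X ^ p * PowerSeries.mk fun k => if p ∣ k then coeff (k / p) H else 0 := by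
        rw [hω.prod_range_neg_pow, map_neg, map_one, neg_one_mul, hQH]
        congr 1
        ext j
        rw [coeff_expand, coeff_mk]
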